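/- arXiv:2605.30402 — 2 statements merged into one kernel-verified Lean document; each statement's English description precedes it below -/
import Mathlib

section
/- Let λ be a real number, Δ ≥ 3, and n a positive integer. Let U₂ be a unicyclic graph with n vertices and maximum degree Δ having a vertex a of degree Δ not on the cycle, adjacent to Δ-1 leaves, whose nearest cycle vertex b satisfies d(a,b) ≥ 2 and deg(b) = 3, and all other vertices of degree at most 2. Let U₃ be a unicyclic graph with n vertices and maximum degree Δ having a vertex a' of degree Δ on the cycle, adjacent to Δ-2 leaves, with all other vertices of degree at most 2. Then GRM_λ(U₃) − GRM_λ(U₂) = Δ − 2λ − 6; consequently, if Δ > 2λ+6 then GRM_λ(U₃) > GRM_λ(U₂), if Δ < 2λ+6 then GRM_λ(U₂) > GRM_λ(U₃), and if Δ = 2λ+6 then GRM_λ(U₃) = GRM_λ(U₂). -/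
open SimpleGraph

/-- Degree of a vertex (classical decidability). -/
noncomputable def deg {V : Type*} [Fintype V] (G : SimpleGraph V) (v : V) : ℕ :=
  letI := Classical.decEq V
  letI : DecidableRel G.Adj := Classical.decRel _
  G.degree v

/-- Maximum degree of a graph (classical decidability). -/
noncomputable def maxDeg {V : Type*} [Fintype V] (G : SimpleGraph V) : ℕ :=
  letI := Classical.decEq V
  letI : DecidableRel G.Adj := Classical.decRel _
  G.maxDegree

/-- The general reduced second Zagreb index
`GRM_λ(G) = Σ_{ab ∈ E(G)} (deg a + λ)(deg b + λ)`. -/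
noncomputable def GRM {V : Type*} [Fintype V] (l : ℝ) (G : SimpleGraph V) : ℝ :=
  letI := Classical.decEq V
  letI : DecidableRel G.Adj := Classical.decRel _
  ∑ e ∈ G.edgeFinset,
    Sym2.lift ⟨fun a b => ((G.degree a : ℝ) + l) * ((G.degree b : ℝ) + l),
      fun a b => by ring⟩ e

/-- A unicyclic graph: connected with exactly as many edges as vertices. -/
def IsUnicyclic {V : Type*} [Fintype V] (G : SimpleGraph V) : Prop :=
  G.Connected ∧ G.edgeSet.ncard = Fintype.card V

/-- A vertex lies on a cycle of `G`. -/
def OnCycle {V : Type*} (G : SimpleGraph V) (v : V) : Prop :=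
  ∃ (u : V) (w : G.Walk u u), w.IsCycle ∧ v ∈ w.support

/-!
Since a unicyclic graph has as many edges as vertices, the handshake lemma
`∑ deg = 2|E| = 2|V|` together with the degree bounds forces every vertex other than the hub,
the branch vertex `b` and the pendant leaves of the hub to have degree exactly `2`. Splitting
the edge sum into the stars of the hub (and of `b`) and the remaining edges, each of which
contributes `(2 + λ)²`, gives closed forms for both indices, and their difference is
`Δ - 2λ - 6`.
-/

open Finset

theorem IsUnicyclic.card_edgeFinset {V : Type*} [Fintype V] {G : SimpleGraph V}
    [DecidableRel G.Adj] (hG : IsUnicyclic G) : #G.edgeFinset = Fintype.card V := by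
  rw [← hG.2, Set.ncard_eq_toFinset_card' G.edgeSet]
  rfl

namespace SimpleGraph

variable {V : Type*} [Fintype V] (G : SimpleGraph V) [DecidableRel G.Adj]

theorem deg_eq_degree (v : V) : deg G v = G.degree v := by
  unfold deg
  congr!

noncomputable def grmWeight (l : ℝ) : Sym2 V → ℝ :=
  Sym2.lift ⟨fun u v => ((G.degree u : ℝ) + l) * ((G.degree v : ℝ) + l), fun _ _ => mul_comm _ _⟩

theorem GRM_eq_sum_grmWeight (l : ℝ) : GRM l G = ∑ e ∈ G.edgeFinset, G.grmWeight l e := by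
  unfold GRM grmWeight
  congr!

def leafNeighbors (a : V) : Finset V := {v ∈ G.neighborFinset a | G.degree v = 1}

theorem ncard_leaves_eq_card_leafNeighbors (a : V) :
    {v | G.Adj a v ∧ G.degree v = 1}.ncard = #(G.leafNeighbors a) := by
  simp_rw [← Set.ncard_coe_finset, leafNeighbors, coe_filter, mem_neighborFinset]

theorem eq_of_adj_of_degree_eq_one {v a w : V} (hv : G.degree v = 1) (ha : G.Adj v a)
    (hw : G.Adj v w) : w = a := by
  obtain ⟨x, hx⟩ := card_eq_one.1 ((G.card_neighborFinset_eq_degree v).trans hv)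
  have ha' : a ∈ G.neighborFinset v := (G.mem_neighborFinset v a).2 ha
  have hw' : w ∈ G.neighborFinset v := (G.mem_neighborFinset v w).2 hw
  rw [hx, mem_singleton] at ha' hw'
  rw [ha', hw']

theorem notMem_leafNeighbors_of_adj {a v w : V} (h : G.Adj v w) (hw : w ≠ a) :
    v ∉ G.leafNeighbors a := by
  intro hv
  obtain ⟨hav, hdeg⟩ := mem_filter.1 hv
  exact hw (G.eq_of_adj_of_degree_eq_one hdeg ((G.mem_neighborFinset a v).1 hav).symm h)

theorem notMem_leafNeighbors_self (a : V) : a ∉ G.leafNeighbors a := fun h =>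
  G.notMem_neighborFinset_self a (mem_filter.1 h).1

theorem sum_degree_leafNeighbors (a : V) :
    ∑ v ∈ G.leafNeighbors a, G.degree v = #(G.leafNeighbors a) :=
  (sum_const_nat fun _ hv => (mem_filter.1 hv).2).trans (mul_one _)

theorem sum_neighborFinset_degree_add_of_forall_eq (l : ℝ) (a : V) {d : ℕ}
    (h : ∀ w ∈ G.neighborFinset a, G.degree w = d) :
    ∑ w ∈ G.neighborFinset a, ((G.degree w : ℝ) + l) = G.degree a * (d + l) := by
  rw [sum_congr rfl fun w hw => by rw [h w hw], sum_const, card_neighborFinset_eq_degree,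
    nsmul_eq_mul]

theorem sum_neighborFinset_degree_add_of_hub (l : ℝ) (a : V)
    (h : ∀ w ∈ G.neighborFinset a, w ∉ G.leafNeighbors a → G.degree w = 2) :
    ∑ w ∈ G.neighborFinset a, ((G.degree w : ℝ) + l)
      = #(G.leafNeighbors a) * (1 + l) + ((G.degree a : ℝ) - #(G.leafNeighbors a)) * (2 + l) := by
  set L := G.leafNeighbors a
  set R := {w ∈ G.neighborFinset a | G.degree w ≠ 1}
  have hcard : (#L : ℝ) + #R = G.degree a := by
    rw [← card_neighborFinset_eq_degree,
      ← card_filter_add_card_filter_not (s := G.neighborFinset a) (fun w => G.degree w = 1)]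
    push_cast
    rfl
  have hL : ∑ w ∈ L, ((G.degree w : ℝ) + l) = #L * (1 + l) := by
    rw [sum_congr rfl fun w hw => by rw [(mem_filter.1 hw).2, Nat.cast_one], sum_const,
      nsmul_eq_mul]
  have hR : ∑ w ∈ R, ((G.degree w : ℝ) + l) = #R * (2 + l) := by
    refine (sum_congr rfl fun w hw => ?_).trans (by rw [sum_const, nsmul_eq_mul])
    obtain ⟨hw, hw1⟩ := mem_filter.1 hw
    rw [h w hw fun hL => hw1 (mem_filter.1 hL).2, Nat.cast_ofNat]
  rw [← sum_filter_add_sum_filter_not _ (fun w => G.degree w = 1)]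
  change ∑ w ∈ L, _ + ∑ w ∈ R, _ = _
  rw [hL, hR, ← hcard]
  ring

section DecidableEq

variable [DecidableEq V]

theorem degree_eq_two_of_sum_degree_le (hE : #G.edgeFinset = Fintype.card V) (S : Finset V)
    (hS : ∑ v ∈ S, G.degree v ≤ 2 * #S) (hle : ∀ v ∉ S, G.degree v ≤ 2) :
    ∀ v ∉ S, G.degree v = 2 := by
  have hsum : ∑ v ∈ Sᶜ, G.degree v = ∑ v ∈ Sᶜ, 2 := by
    refine le_antisymm (sum_le_sum fun v hv => hle v (mem_compl.1 hv)) ?_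
    have := sum_add_sum_compl S (fun v => G.degree v)
    rw [sum_degrees_eq_twice_card_edges, hE] at this
    rw [sum_const, card_compl, smul_eq_mul]
    have := S.card_le_univ
    omega
  intro v hv
  exact (sum_eq_sum_iff_of_le fun w hw => hle w (mem_compl.1 hw)).1 hsum v (mem_compl.2 hv)

theorem degree_eq_two_of_hub (hE : #G.edgeFinset = Fintype.card V) (T : Finset V) (a : V)
    (hTL : Disjoint T (G.leafNeighbors a))
    (hsum : ∑ t ∈ T, G.degree t ≤ 2 * #T + #(G.leafNeighbors a))
    (hle : ∀ v ∉ T, v ∉ G.leafNeighbors a → G.degree v ≤ 2) :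
    ∀ v ∉ T, v ∉ G.leafNeighbors a → G.degree v = 2 := by
  have hS := G.degree_eq_two_of_sum_degree_le hE (T ∪ G.leafNeighbors a)
    (by rw [sum_union hTL, sum_degree_leafNeighbors, card_union_of_disjoint hTL]; omega)
    (fun v hv => hle v (fun h => hv (mem_union_left _ h)) fun h => hv (mem_union_right _ h))
  exact fun v hvT hvL => hS v (by simp [hvT, hvL])

theorem incidenceFinset_eq_image (t : V) :
    G.incidenceFinset t = (G.neighborFinset t).image (s(t, ·)) := by
  ext e
  rw [mem_incidenceFinset, mem_image]
  constructor
  · intro he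
    induction e with
    | h u v =>
      obtain ⟨h, rfl | rfl⟩ := (mk'_mem_incidenceSet_iff G).1 he
      · exact ⟨v, (G.mem_neighborFinset _ _).2 h, rfl⟩
      · exact ⟨u, (G.mem_neighborFinset _ _).2 h.symm, Sym2.eq_swap⟩
  · rintro ⟨w, hw, rfl⟩
    exact (mk'_mem_incidenceSet_iff G).2 ⟨(G.mem_neighborFinset _ _).1 hw, Or.inl rfl⟩

theorem sum_incidenceFinset {M : Type*} [AddCommMonoid M] (F : Sym2 V → M) (t : V) :
    ∑ e ∈ G.incidenceFinset t, F e = ∑ w ∈ G.neighborFinset t, F s(t, w) := by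
  rw [incidenceFinset_eq_image, sum_image fun _ _ _ _ h => Sym2.congr_right.1 h]

theorem sum_edgeFinset_eq_sum_neighborFinset_add {M : Type*} [AddCommMonoid M] (F : Sym2 V → M)
    (T : Finset V) (hT : G.IsIndepSet T) :
    ∑ e ∈ G.edgeFinset, F e = ∑ t ∈ T, ∑ w ∈ G.neighborFinset t, F s(t, w)
      + ∑ e ∈ G.edgeFinset with ∀ t ∈ T, t ∉ e, F e := by
  have hstars : {e ∈ G.edgeFinset | ∃ t ∈ T, t ∈ e} = T.biUnion fun t => G.incidenceFinset t := by
    ext e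
    simp only [mem_filter, mem_biUnion, incidenceFinset_eq_filter]
    tauto
  have hdisj : (T : Set V).PairwiseDisjoint fun t => G.incidenceFinset t := by
    intro t ht t' ht' hne
    rw [Function.onFun, Finset.disjoint_left]
    intro e he he'
    rw [mem_incidenceFinset] at he he'
    rw [(Sym2.mem_and_mem_iff hne).1 ⟨he.2, he'.2⟩] at he
    exact hT ht ht' hne he.1
  rw [← sum_filter_add_sum_filter_not G.edgeFinset (fun e => ∃ t ∈ T, t ∈ e), hstars,
    sum_biUnion hdisj]
  simp only [sum_incidenceFinset, not_exists, not_and]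

theorem sum_edgeFinset_eq_of_forall_notMem (F : Sym2 V → ℝ) (c : ℝ) (T : Finset V)
    (hT : G.IsIndepSet T) (hF : ∀ e ∈ G.edgeFinset, (∀ t ∈ T, t ∉ e) → F e = c) :
    ∑ e ∈ G.edgeFinset, F e = ∑ t ∈ T, ∑ w ∈ G.neighborFinset t, F s(t, w)
      + (#G.edgeFinset - ∑ t ∈ T, (G.degree t : ℝ)) * c := by
  -- the decomposition applied to `F = 1` counts the edges avoiding `T`
  have hcount := G.sum_edgeFinset_eq_sum_neighborFinset_add (fun _ => (1 : ℝ)) T hT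
  simp only [sum_const, nsmul_eq_mul, mul_one, card_neighborFinset_eq_degree] at hcount
  rw [G.sum_edgeFinset_eq_sum_neighborFinset_add F T hT, hcount, add_sub_cancel_left,
    sum_congr rfl fun e he => hF e (mem_filter.1 he).1 (mem_filter.1 he).2, sum_const,
    nsmul_eq_mul]

theorem GRM_eq_of_degree_eq_two (l : ℝ) (T : Finset V) (hT : G.IsIndepSet T) {a : V} (ha : a ∈ T)
    (h2 : ∀ v ∉ T, v ∉ G.leafNeighbors a → G.degree v = 2) :
    GRM l G = ∑ t ∈ T, ((G.degree t : ℝ) + l) * ∑ w ∈ G.neighborFinset t, ((G.degree w : ℝ) + l)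
      + (#G.edgeFinset - ∑ t ∈ T, (G.degree t : ℝ)) * (2 + l) ^ 2 := by
  have hrest : ∀ e ∈ G.edgeFinset, (∀ t ∈ T, t ∉ e) → G.grmWeight l e = (2 + l) ^ 2 := by
    -- a leaf of `a` has no neighbour other than `a ∈ T`
    have hend : ∀ u v, G.Adj u v → u ∉ T → v ∉ T → G.degree u = 2 := fun u v huv hu hv =>
      h2 u hu (G.notMem_leafNeighbors_of_adj huv fun hva => hv (hva ▸ ha))
    intro e he hT'
    induction e with
    | h u v =>
      rw [mem_edgeFinset, mem_edgeSet] at he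
      have hu : u ∉ T := fun hu => hT' u hu (Sym2.mem_mk_left u v)
      have hv : v ∉ T := fun hv => hT' v hv (Sym2.mem_mk_right u v)
      simp only [grmWeight, Sym2.lift_mk, hend u v he hu hv, hend v u he.symm hv hu]
      push_cast
      ring
  rw [GRM_eq_sum_grmWeight, G.sum_edgeFinset_eq_of_forall_notMem _ _ T hT hrest]
  simp only [grmWeight, Sym2.lift_mk, ← mul_sum]

theorem GRM_eq_of_hub (l : ℝ) (hE : #G.edgeFinset = Fintype.card V) (a : V)
    (ha : G.degree a = #(G.leafNeighbors a) + 2) (hdeg : ∀ v, v ≠ a → G.degree v ≤ 2) :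
    GRM l G = ((G.degree a : ℝ) + l) * (#(G.leafNeighbors a) * (1 + l) + 2 * (2 + l))
      + (Fintype.card V - G.degree a) * (2 + l) ^ 2 := by
  have h2 := G.degree_eq_two_of_hub hE {a} a
    (disjoint_singleton_left.2 (G.notMem_leafNeighbors_self a))
    (by rw [sum_singleton, card_singleton, ha]; omega)
    (fun v hv _ => hdeg v (by simpa using hv))
  have hstar : ∀ w ∈ G.neighborFinset a, w ∉ G.leafNeighbors a → G.degree w = 2 :=
    fun w hw => h2 w (by simpa using (G.ne_of_adj ((G.mem_neighborFinset a w).1 hw)).symm)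
  rw [G.GRM_eq_of_degree_eq_two l {a} (by simp) (mem_singleton_self a) h2, sum_singleton,
    sum_singleton, G.sum_neighborFinset_degree_add_of_hub l a hstar, hE, ha]
  push_cast
  ring

theorem GRM_eq_of_hub_of_branch (l : ℝ) (hE : #G.edgeFinset = Fintype.card V) {a b : V}
    (hab : a ≠ b) (hnadj : ¬G.Adj a b) (ha : G.degree a = #(G.leafNeighbors a) + 1)
    (hb : G.degree b = 3) (hdeg : ∀ v, v ≠ a → v ≠ b → G.degree v ≤ 2) :
    GRM l G = ((G.degree a : ℝ) + l) * (#(G.leafNeighbors a) * (1 + l) + (2 + l))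
      + 3 * (3 + l) * (2 + l) + (Fintype.card V - G.degree a - 3) * (2 + l) ^ 2 := by
  have hbL : b ∉ G.leafNeighbors a := fun h =>
    hnadj ((G.mem_neighborFinset a b).1 (mem_filter.1 h).1)
  have h2 := G.degree_eq_two_of_hub hE {a, b} a
    (disjoint_insert_left.2 ⟨G.notMem_leafNeighbors_self a, disjoint_singleton_left.2 hbL⟩)
    (by rw [sum_pair hab, card_pair hab, ha, hb]; omega)
    (fun v hv _ => by simp only [mem_insert, mem_singleton, not_or] at hv; exact hdeg v hv.1 hv.2)
  have hstar_a : ∀ w ∈ G.neighborFinset a, w ∉ G.leafNeighbors a → G.degree w = 2 := by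
    intro w hw
    rw [mem_neighborFinset] at hw
    refine h2 w ?_
    simp only [mem_insert, mem_singleton, not_or]
    exact ⟨(G.ne_of_adj hw).symm, fun hwb => hnadj (hwb ▸ hw)⟩
  have hstar_b : ∀ w ∈ G.neighborFinset b, G.degree w = 2 := by
    intro w hw
    rw [mem_neighborFinset] at hw
    refine h2 w ?_ (G.notMem_leafNeighbors_of_adj hw.symm (Ne.symm hab))
    simp only [mem_insert, mem_singleton, not_or]
    exact ⟨fun hwa => hnadj (hwa ▸ hw.symm), (G.ne_of_adj hw).symm⟩
  have hT : G.IsIndepSet ({a, b} : Finset V) := by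
    rw [coe_pair, isIndepSet_iff, Set.pairwise_pair]
    exact fun _ => ⟨hnadj, fun h => hnadj h.symm⟩
  rw [G.GRM_eq_of_degree_eq_two l {a, b} hT (mem_insert_self a {b}) h2, sum_pair hab,
    sum_pair hab, G.sum_neighborFinset_degree_add_of_hub l a hstar_a,
    G.sum_neighborFinset_degree_add_of_forall_eq l b hstar_b, hE, ha, hb]
  push_cast
  ring

end DecidableEq

end SimpleGraph

theorem stmt17_general {V₂ V₃ : Type*} [Fintype V₂] [Fintype V₃]
    (l : ℝ) (n Δ : ℕ) (hΔ3 : 3 ≤ Δ)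
    (U₂ : SimpleGraph V₂) (hU₂ : IsUnicyclic U₂)
    (hcard₂ : Fintype.card V₂ = n)
    (a : V₂) (ha : deg U₂ a = Δ)
    (hleaves₂ : {v : V₂ | U₂.Adj a v ∧ deg U₂ v = 1}.ncard = Δ - 1)
    (b : V₂)
    (hdist : 2 ≤ U₂.dist a b) (hdegb : deg U₂ b = 3)
    (hother₂ : ∀ c : V₂, c ≠ a → c ≠ b → deg U₂ c ≤ 2)
    (U₃ : SimpleGraph V₃) (hU₃ : IsUnicyclic U₃)
    (hcard₃ : Fintype.card V₃ = n)
    (a' : V₃) (ha' : deg U₃ a' = Δ)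
    (hleaves₃ : {v : V₃ | U₃.Adj a' v ∧ deg U₃ v = 1}.ncard = Δ - 2)
    (hother₃ : ∀ c : V₃, c ≠ a' → deg U₃ c ≤ 2) :
    GRM l U₃ - GRM l U₂ = (Δ : ℝ) - 2 * l - 6 ∧
      (2 * l + 6 < (Δ : ℝ) → GRM l U₂ < GRM l U₃) ∧
      ((Δ : ℝ) < 2 * l + 6 → GRM l U₃ < GRM l U₂) ∧
      ((Δ : ℝ) = 2 * l + 6 → GRM l U₃ = GRM l U₂) := by
  classical
  simp only [deg_eq_degree, ncard_leaves_eq_card_leafNeighbors]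
    at ha hleaves₂ hdegb hother₂ ha' hleaves₃ hother₃
  have hab : a ≠ b := by
    rintro rfl
    simp at hdist
  have hnadj : ¬U₂.Adj a b := fun h => by
    rw [dist_eq_one_iff_adj.2 h] at hdist
    omega
  have h₂ := U₂.GRM_eq_of_hub_of_branch l hU₂.card_edgeFinset hab hnadj (by omega) hdegb hother₂
  have h₃ := U₃.GRM_eq_of_hub l hU₃.card_edgeFinset a' (by omega) hother₃
  have hk₂ : (#(U₂.leafNeighbors a) : ℝ) = Δ - 1 := by
    rw [hleaves₂, Nat.cast_sub (by omega), Nat.cast_one]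
  have hk₃ : (#(U₃.leafNeighbors a') : ℝ) = Δ - 2 := by
    rw [hleaves₃, Nat.cast_sub (by omega), Nat.cast_ofNat]
  have hdiff : GRM l U₃ - GRM l U₂ = (Δ : ℝ) - 2 * l - 6 := by
    rw [h₂, h₃, hk₂, hk₃, ha, ha', hcard₂, hcard₃]
    ring
  exact ⟨hdiff, fun h => by linarith, fun h => by linarith, fun h => by linarith⟩

theorem stmt17 {V₂ V₃ : Type*} [Fintype V₂] [Fintype V₃]
    (l : ℝ) (n Δ : ℕ) (hΔ3 : 3 ≤ Δ) (hn : 0 < n)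
    (U₂ : SimpleGraph V₂) (hU₂ : IsUnicyclic U₂)
    (hcard₂ : Fintype.card V₂ = n) (hmax₂ : maxDeg U₂ = Δ)
    (a : V₂) (ha : deg U₂ a = Δ) (hacyc : ¬ OnCycle U₂ a)
    (hleaves₂ : {v : V₂ | U₂.Adj a v ∧ deg U₂ v = 1}.ncard = Δ - 1)
    (b : V₂) (hbcyc : OnCycle U₂ b)
    (hmin : ∀ c : V₂, OnCycle U₂ c → U₂.dist a b ≤ U₂.dist a c)
    (hdist : 2 ≤ U₂.dist a b) (hdegb : deg U₂ b = 3)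
    (hother₂ : ∀ c : V₂, c ≠ a → c ≠ b → deg U₂ c ≤ 2)
    (U₃ : SimpleGraph V₃) (hU₃ : IsUnicyclic U₃)
    (hcard₃ : Fintype.card V₃ = n) (hmax₃ : maxDeg U₃ = Δ)
    (a' : V₃) (ha' : deg U₃ a' = Δ) (hacyc' : OnCycle U₃ a')
    (hleaves₃ : {v : V₃ | U₃.Adj a' v ∧ deg U₃ v = 1}.ncard = Δ - 2)
    (hother₃ : ∀ c : V₃, c ≠ a' → deg U₃ c ≤ 2) :
    GRM l U₃ - GRM l U₂ = (Δ : ℝ) - 2 * l - 6 ∧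
      (2 * l + 6 < (Δ : ℝ) → GRM l U₂ < GRM l U₃) ∧
      ((Δ : ℝ) < 2 * l + 6 → GRM l U₃ < GRM l U₂) ∧
      ((Δ : ℝ) = 2 * l + 6 → GRM l U₃ = GRM l U₂) :=
  stmt17_general l n Δ hΔ3 U₂ hU₂ hcard₂ a ha hleaves₂ b hdist hdegb hother₂ U₃ hU₃ hcard₃ a' ha'
    hleaves₃ hother₃
end

section
/- Let λ ≥ -1/2 be a real number and let Γ be a connected simple graph with n ≥ 3 vertices and maximum degree Δ. If Δ < n-1 then GRM_λ(Γ) ≥ n(2+λ)² − 3(2+λ) + (1+λ)(Δ² − 3Δ − λ), and if Δ = n-1 then GRM_λ(Γ) ≥ Δ(Δ+λ)(1+λ). -/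
/-!
Write `d v` for degrees. Summing over ordered pairs of adjacent vertices,
`2 GRM_λ = Σ_{u ~ v} (d u - 2)(d v - 2) + 2 (2 + λ) Σ_v (d v)² + (λ² - 4) Σ_v d v`.
A term of the first sum is negative only on a pendant edge, where it is `2 - d v` at the
non-leaf end `v`. If `Δ ≤ n - 2`, every vertex has a neighbour of degree at least 2 (a vertex
whose neighbours are all leaves would span the whole connected graph), so `v` carries at most
`d v - 1` leaves and the first sum is at least `-2 Σ_v (d v - 1)(d v - 2)`. Together with
`Σ_v (d v - 1)(d v - 2) ≥ (Δ - 1)(Δ - 2)` and `Σ_v d v ≥ 2 (n - 1)` this gives the first bound.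
For the second, the `Δ` edges at a vertex of maximum degree each contribute at least
`(Δ + λ)(1 + λ)`, and no edge contributes a negative amount.
-/

open SimpleGraph

open Finset

theorem cast_sub_one_mul_sub_two_nonneg (k : ℕ) : 0 ≤ ((k : ℝ) - 1) * ((k : ℝ) - 2) := by
  rcases k with _ | _ | k
  · norm_num
  · norm_num
  · push_cast
    nlinarith

theorem cast_mul_sub_two_le_of_lt {m k : ℕ} (h : m < k) :
    (m : ℝ) * ((k : ℝ) - 2) ≤ ((k : ℝ) - 1) * ((k : ℝ) - 2) := by
  rcases Nat.lt_or_ge k 2 with hk | hk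
  · obtain rfl : k = 1 := by omega
    obtain rfl : m = 0 := by omega
    norm_num
  · have hk' : (2 : ℝ) ≤ k := by exact_mod_cast hk
    have hm : (m : ℝ) ≤ k - 1 := by
      rw [le_sub_iff_add_le]
      exact_mod_cast h
    exact mul_le_mul_of_nonneg_right hm (by linarith)

theorem neg_ite_add_ite_le_sub_two_mul_sub_two {a b : ℕ} (ha : 1 ≤ a) (hb : 1 ≤ b)
    (hab : 2 ≤ a ∨ 2 ≤ b) :
    -((if b = 1 then (a : ℝ) - 2 else 0) + (if a = 1 then (b : ℝ) - 2 else 0))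
      ≤ ((a : ℝ) - 2) * ((b : ℝ) - 2) := by
  split_ifs with hb1 ha1 ha1
  · omega
  · rw [hb1]; norm_num
  · rw [ha1]; norm_num
  · have ha2 : (2 : ℝ) ≤ a := by exact_mod_cast (show 2 ≤ a by omega)
    have hb2 : (2 : ℝ) ≤ b := by exact_mod_cast (show 2 ≤ b by omega)
    nlinarith

namespace SimpleGraph

variable {V : Type*} [Fintype V] (G : SimpleGraph V) [DecidableRel G.Adj]

section DartSums

variable {M : Type*} [AddCommMonoid M]

theorem sum_darts_eq_sum_neighborFinset [DecidableEq V] (f : V → V → M) :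
    ∑ d : G.Dart, f d.fst d.snd = ∑ v, ∑ u ∈ G.neighborFinset v, f v u := by
  rw [← sum_fiberwise_of_maps_to (g := fun d : G.Dart => d.fst) (t := univ)
    fun d _ => mem_univ d.fst]
  refine sum_congr rfl fun v _ => ?_
  rw [dart_fst_fiber, sum_image fun _ _ _ _ h => G.dartOfNeighborSet_injective v h,
    sum_subtype (G.neighborFinset v) (fun u => G.mem_neighborFinset v u) (f v)]
  rfl

theorem sum_darts_fst [DecidableEq V] (g : V → M) :
    ∑ d : G.Dart, g d.fst = ∑ v, G.degree v • g v := by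
  rw [G.sum_darts_eq_sum_neighborFinset fun v _ => g v]
  simp only [sum_const, card_neighborFinset_eq_degree]

theorem sum_darts_symm (f : G.Dart → M) : ∑ d : G.Dart, f d.symm = ∑ d, f d :=
  Equiv.sum_comp (Function.Involutive.toPerm _ Dart.symm_involutive) f

theorem sum_darts_eq_two_nsmul_sum_edgeFinset [DecidableEq V] (f : V → V → M)
    (hf : ∀ a b, f a b = f b a) :
    ∑ d : G.Dart, f d.fst d.snd = 2 • ∑ e ∈ G.edgeFinset, Sym2.lift ⟨f, hf⟩ e := by
  rw [← sum_fiberwise_of_maps_to (g := Dart.edge) (t := G.edgeFinset) fun d _ => by simp,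
    smul_sum]
  refine sum_congr rfl fun e he => ?_
  rw [sum_congr rfl fun d hd => show f d.fst d.snd = Sym2.lift ⟨f, hf⟩ e by
      rw [← (mem_filter.1 hd).2]; rfl,
    sum_const, G.dart_edge_fiber_card e (mem_edgeFinset.1 he)]

end DartSums

theorem GRM_eq_sum_edgeFinset (l : ℝ) :
    GRM l G = ∑ e ∈ G.edgeFinset,
      Sym2.lift ⟨fun a b => ((G.degree a : ℝ) + l) * ((G.degree b : ℝ) + l),
        fun a b => by ring⟩ e := by
  unfold GRM
  congr!

theorem two_mul_GRM [DecidableEq V] (l : ℝ) :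
    2 * GRM l G = ∑ d : G.Dart, ((G.degree d.fst : ℝ) - 2) * ((G.degree d.snd : ℝ) - 2)
      + 2 * (2 + l) * ∑ v, (G.degree v : ℝ) ^ 2 + (l ^ 2 - 4) * ∑ v, (G.degree v : ℝ) := by
  set h : V → ℝ := fun v => (2 + l) * G.degree v + (l ^ 2 - 4) / 2
  have hsplit (d : G.Dart) : ((G.degree d.fst : ℝ) + l) * ((G.degree d.snd : ℝ) + l)
      = ((G.degree d.fst : ℝ) - 2) * ((G.degree d.snd : ℝ) - 2) + h d.fst + h d.symm.fst := by
    simp only [h, Dart.symm_toProd, Prod.fst_swap]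
    ring
  have hfst : ∑ d : G.Dart, h d.fst = (2 + l) * ∑ v, (G.degree v : ℝ) ^ 2
      + (l ^ 2 - 4) / 2 * ∑ v, (G.degree v : ℝ) := by
    simp only [G.sum_darts_fst h, h, nsmul_eq_mul, mul_sum, ← sum_add_distrib]
    exact sum_congr rfl fun v _ => by ring
  rw [GRM_eq_sum_edgeFinset, two_mul, ← two_nsmul, ← sum_darts_eq_two_nsmul_sum_edgeFinset]
  simp only [hsplit, sum_add_distrib, G.sum_darts_symm fun d => h d.fst, hfst]
  ring

theorem Reachable.exists_adj_two_le_degree {v w : V} (hvw : G.Reachable v w) (hne : v ≠ w)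
    (hnadj : ¬G.Adj v w) : ∃ u, G.Adj v u ∧ 2 ≤ G.degree u := by
  obtain ⟨p, hp⟩ := hvw.exists_isPath
  cases p with
  | nil => exact absurd rfl hne
  | @cons _ u _ hvu q =>
    cases q with
    | nil => exact absurd hvu hnadj
    | @cons _ x _ hux q =>
      refine ⟨u, hvu, ?_⟩
      have hvx : v ≠ x := fun h => by
        subst h
        simp [Walk.cons_isPath_iff] at hp
      rw [← card_neighborFinset_eq_degree]
      exact one_lt_card.2
        ⟨v, (G.mem_neighborFinset u v).2 hvu.symm, x, (G.mem_neighborFinset u x).2 hux, hvx⟩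

theorem Connected.exists_adj_two_le_degree [DecidableEq V] (hconn : G.Connected)
    (hΔ : G.maxDegree + 2 ≤ Fintype.card V) (v : V) : ∃ u, G.Adj v u ∧ 2 ≤ G.degree u := by
  have hcard : #(insert v (G.neighborFinset v)) < #(univ : Finset V) := by
    rw [card_univ]
    linarith [card_insert_le v (G.neighborFinset v), G.card_neighborFinset_eq_degree v,
      G.degree_le_maxDegree v]
  obtain ⟨w, -, hw⟩ := exists_mem_notMem_of_card_lt_card hcard
  rw [mem_insert, mem_neighborFinset, not_or] at hw
  exact (hconn v w).exists_adj_two_le_degree G (Ne.symm hw.1) hw.2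

theorem two_le_degree_of_adj_of_degree_eq_one {v w : V} (H : ∃ u, G.Adj v u ∧ 2 ≤ G.degree u)
    (hv : G.degree v = 1) (hvw : G.Adj v w) : 2 ≤ G.degree w := by
  obtain ⟨u, hvu, hu⟩ := H
  obtain ⟨x, -, hx⟩ := degree_eq_one_iff_existsUnique_adj.1 hv
  rwa [hx w hvw, ← hx u hvu]

theorem card_filter_degree_eq_one_lt [DecidableEq V] {v : V}
    (H : ∃ u, G.Adj v u ∧ 2 ≤ G.degree u) :
    #{u ∈ G.neighborFinset v | G.degree u = 1} < G.degree v := by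
  obtain ⟨u, hvu, hu⟩ := H
  rw [← card_neighborFinset_eq_degree]
  exact card_lt_card <| filter_ssubset.2 ⟨u, (G.mem_neighborFinset v u).2 hvu, by omega⟩

theorem sum_darts_ite_degree_snd_eq_one_le [DecidableEq V]
    (H : ∀ v, ∃ u, G.Adj v u ∧ 2 ≤ G.degree u) :
    ∑ d : G.Dart, (if G.degree d.snd = 1 then (G.degree d.fst : ℝ) - 2 else 0)
      ≤ ∑ v, ((G.degree v : ℝ) - 1) * ((G.degree v : ℝ) - 2) := by
  rw [G.sum_darts_eq_sum_neighborFinset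
    fun v u => if G.degree u = 1 then (G.degree v : ℝ) - 2 else 0]
  refine sum_le_sum fun v _ => ?_
  rw [← sum_filter, sum_const, nsmul_eq_mul]
  exact cast_mul_sub_two_le_of_lt (G.card_filter_degree_eq_one_lt (H v))

theorem neg_two_mul_sum_le_sum_darts [DecidableEq V]
    (H : ∀ v, ∃ u, G.Adj v u ∧ 2 ≤ G.degree u) :
    -2 * ∑ v, ((G.degree v : ℝ) - 1) * ((G.degree v : ℝ) - 2) ≤
      ∑ d : G.Dart, ((G.degree d.fst : ℝ) - 2) * ((G.degree d.snd : ℝ) - 2) := by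
  set g : G.Dart → ℝ := fun d => if G.degree d.snd = 1 then (G.degree d.fst : ℝ) - 2 else 0
  have hpair (d : G.Dart) :
      -(g d + g d.symm) ≤ ((G.degree d.fst : ℝ) - 2) * ((G.degree d.snd : ℝ) - 2) := by
    have ha : 1 ≤ G.degree d.fst := (G.degree_pos_iff_exists_adj _).2 ⟨_, d.adj⟩
    have hb : 1 ≤ G.degree d.snd := (G.degree_pos_iff_exists_adj _).2 ⟨_, d.adj.symm⟩
    refine neg_ite_add_ite_le_sub_two_mul_sub_two ha hb ?_
    by_contra! h
    have := G.two_le_degree_of_adj_of_degree_eq_one (H _) (by omega) d.adj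
    omega
  calc -2 * ∑ v, ((G.degree v : ℝ) - 1) * ((G.degree v : ℝ) - 2)
      ≤ -(∑ d, g d + ∑ d : G.Dart, g d.symm) := by
        rw [G.sum_darts_symm g]
        linarith [G.sum_darts_ite_degree_snd_eq_one_le H]
    _ = ∑ d : G.Dart, -(g d + g d.symm) := by rw [sum_neg_distrib, sum_add_distrib]
    _ ≤ _ := sum_le_sum fun d _ => hpair d

theorem Connected.two_mul_card_sub_one_le_sum_degree (hconn : G.Connected) :
    2 * ((Fintype.card V : ℝ) - 1) ≤ ∑ v, (G.degree v : ℝ) := by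
  have hedges := hconn.card_vert_le_card_edgeSet_add_one
  rw [Nat.card_eq_fintype_card, Nat.card_eq_fintype_card, ← edgeFinset_card] at hedges
  have hsum : ∑ v, (G.degree v : ℝ) = 2 * #G.edgeFinset := by
    exact_mod_cast G.sum_degrees_eq_twice_card_edges
  have : (Fintype.card V : ℝ) ≤ #G.edgeFinset + 1 := by exact_mod_cast hedges
  linarith

theorem Connected.le_GRM_of_maxDegree_add_two_le [DecidableEq V] (hconn : G.Connected)
    (hΔ : G.maxDegree + 2 ≤ Fintype.card V) {l : ℝ} (hl : -1 ≤ l) :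
    (Fintype.card V : ℝ) * (2 + l) ^ 2 - 3 * (2 + l)
      + (1 + l) * ((G.maxDegree : ℝ) ^ 2 - 3 * G.maxDegree - l) ≤ GRM l G := by
  have hT := G.neg_two_mul_sum_le_sum_darts (hconn.exists_adj_two_le_degree G hΔ)
  have hGRM := G.two_mul_GRM l
  have : Nonempty V := hconn.nonempty
  obtain ⟨v₀, hv₀⟩ := G.exists_maximal_degree_vertex
  have hR : ((G.maxDegree : ℝ) - 1) * (G.maxDegree - 2)
      ≤ ∑ v, ((G.degree v : ℝ) - 1) * ((G.degree v : ℝ) - 2) := by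
    rw [hv₀]
    exact single_le_sum (fun v _ => cast_sub_one_mul_sub_two_nonneg (G.degree v)) (mem_univ v₀)
  have hR' : ∑ v, ((G.degree v : ℝ) - 1) * ((G.degree v : ℝ) - 2)
      = ∑ v, (G.degree v : ℝ) ^ 2 - 3 * ∑ v, (G.degree v : ℝ) + 2 * Fintype.card V := by
    have hn : (Fintype.card V : ℝ) = ∑ _w : V, (1 : ℝ) := by simp
    rw [hn, mul_sum, mul_sum, ← sum_sub_distrib, ← sum_add_distrib]
    exact sum_congr rfl fun w _ => by ring
  have hP := hconn.two_mul_card_sub_one_le_sum_degree G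
  -- `2 (GRM - bound) = (T + 2R) + 2 (1 + l) (R - (Δ - 1)(Δ - 2)) + (2 + l)(4 + l) (P - 2 (n - 1))`,
  -- where `T`, `R`, `P` are the sums in `hT`, `hR`, `hP`.
  nlinarith [mul_nonneg (show 0 ≤ 1 + l by linarith) (sub_nonneg.2 hR),
    mul_nonneg (show 0 ≤ (2 + l) * (4 + l) by nlinarith) (sub_nonneg.2 hP)]

theorem degree_mul_le_GRM {l : ℝ} (hl : -1 ≤ l) (v : V) :
    (G.degree v : ℝ) * ((G.degree v + l) * (1 + l)) ≤ GRM l G := by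
  classical
  have hdeg {a b : V} (h : G.Adj a b) : (1 : ℝ) ≤ G.degree a := by
    exact_mod_cast (G.degree_pos_iff_exists_adj a).2 ⟨b, h⟩
  rw [GRM_eq_sum_edgeFinset]
  calc (G.degree v : ℝ) * ((G.degree v + l) * (1 + l))
      = ∑ e ∈ G.incidenceFinset v, ((G.degree v : ℝ) + l) * (1 + l) := by
        rw [sum_const, card_incidenceFinset_eq_degree, nsmul_eq_mul]
    _ ≤ ∑ e ∈ G.incidenceFinset v, Sym2.lift ⟨fun a b => ((G.degree a : ℝ) + l) *
          ((G.degree b : ℝ) + l), fun a b => by ring⟩ e := by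
        refine sum_le_sum fun e he => ?_
        obtain ⟨he, hve⟩ := (G.mem_incidenceFinset v e).1 he
        obtain ⟨u, rfl⟩ := Sym2.mem_iff_exists.1 hve
        have hvu : G.Adj v u := he
        exact mul_le_mul_of_nonneg_left (by linarith [hdeg hvu.symm]) (by linarith [hdeg hvu])
    _ ≤ _ := by
        refine sum_le_sum_of_subset_of_nonneg (G.incidenceFinset_subset v) fun e he _ => ?_
        induction e using Sym2.ind with
        | _ a b =>
          have hab : G.Adj a b := mem_edgeFinset.1 he
          exact mul_nonneg (by linarith [hdeg hab]) (by linarith [hdeg hab.symm])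

end SimpleGraph

theorem stmt18_general {V : Type*} [Fintype V] (l : ℝ) (hl : -1/2 ≤ l)
    (n Δ : ℕ) (G : SimpleGraph V) (hconn : G.Connected)
    (hcard : Fintype.card V = n) (hmax : maxDeg G = Δ) :
    (Δ < n - 1 →
      GRM l G ≥ (n : ℝ) * (2 + l) ^ 2 - 3 * (2 + l)
        + (1 + l) * ((Δ : ℝ) ^ 2 - 3 * (Δ : ℝ) - l)) ∧
    (Δ = n - 1 →
      GRM l G ≥ (Δ : ℝ) * ((Δ : ℝ) + l) * (1 + l)) := by
  classical
  have hΔ : G.maxDegree = Δ := hmax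
  subst hcard hΔ
  refine ⟨fun h => hconn.le_GRM_of_maxDegree_add_two_le G (by omega) (by linarith), fun _ => ?_⟩
  have : Nonempty V := hconn.nonempty
  obtain ⟨v, hv⟩ := G.exists_maximal_degree_vertex
  rw [hv, ge_iff_le, mul_assoc]
  exact G.degree_mul_le_GRM (by linarith) v

theorem stmt18 {V : Type*} [Fintype V] (l : ℝ) (hl : -1/2 ≤ l)
    (n Δ : ℕ) (hn : 3 ≤ n) (G : SimpleGraph V) (hconn : G.Connected)
    (hcard : Fintype.card V = n) (hmax : maxDeg G = Δ) :
    (Δ < n - 1 →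
      GRM l G ≥ (n : ℝ) * (2 + l) ^ 2 - 3 * (2 + l)
        + (1 + l) * ((Δ : ℝ) ^ 2 - 3 * (Δ : ℝ) - l)) ∧
    (Δ = n - 1 →
      GRM l G ≥ (Δ : ℝ) * ((Δ : ℝ) + l) * (1 + l)) :=
  stmt18_general l hl n Δ G hconn hcard hmax
end
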